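/- Let m : ℝ → ℝ be measurable with 0 < c ≤ m ≤ C, and let z = x + iy with y ≠ 0. Then ∂ω_m/∂y (z) = ∫_ℝ y/((x-t)² + y²) · m(t) dt = π P_m(z), where P_m is the Poisson transform of m(t)dt. In particular |∂ω_m/∂y(z)| is bounded above and below by positive constants depending only on c, C. -/

import Mathlib

/-!
For `z = x + iy` with `y ≠ 0` and `t ≠ 0`, `log ‖1 - z/t‖ = ½ log ((x - t)² + y²) - log |t|`,
whose `y`-derivative is the Poisson kernel `y / ((x - t)² + y²)`. The integrand of `ω_m` is
integrable: near the origin it is a sum of locally integrable logarithms, and for large `|t|` the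
correction `χ(t) Re z / t` cancels the linear part of `log ‖1 - z/t‖`, leaving `O(‖z‖² / t²)`.
The Poisson kernel is dominated uniformly for `y` in a neighbourhood of a nonzero point, so one may
differentiate under the integral sign. The bounds come from `∫ |y| / ((x - t)² + y²) dt = π` and
the fact that the kernel has the sign of `y`.
-/

open MeasureTheory

/-- `χ(t) = 1 - 1_{[-1,1]}(t)`. -/
noncomputable def chi (t : ℝ) : ℝ := if t ∈ Set.Icc (-1 : ℝ) 1 then 0 else 1

/-- The modified logarithmic potential `ω_m`. -/
noncomputable def omegaPot (m : ℝ → ℝ) (z : ℂ) : ℝ :=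
  ∫ t : ℝ, (Real.log ‖1 - z / (t : ℂ)‖ + chi t * z.re / t) * m t

/-- The Poisson transform of `m(t)dt`. -/
noncomputable def poissonT (m : ℝ → ℝ) (x y : ℝ) : ℝ :=
  (1 / Real.pi) * ∫ t : ℝ, y / ((x - t) ^ 2 + y ^ 2) * m t

open Set Filter Real

lemma integrable_inv_sub_sq_add_sq (x : ℝ) {a : ℝ} (ha : a ≠ 0) :
    Integrable fun t : ℝ => ((x - t) ^ 2 + a ^ 2)⁻¹ := by
  have h := ((integrable_inv_one_add_sq.comp_div ha).comp_sub_right x).const_mul (a ^ 2)⁻¹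
  refine h.congr (ae_of_all _ fun t => ?_)
  field_simp
  ring

lemma integral_poissonKernel (x : ℝ) {a : ℝ} (ha : 0 < a) :
    ∫ t : ℝ, a / ((x - t) ^ 2 + a ^ 2) = π := by
  have h : (fun t : ℝ => a / ((x - t) ^ 2 + a ^ 2)) =
      fun t => a⁻¹ * (fun u : ℝ => (1 + (u / a) ^ 2)⁻¹) (t - x) := by
    funext t
    field_simp
    ring
  rw [h, integral_const_mul, integral_sub_right_eq_self (fun u : ℝ => (1 + (u / a) ^ 2)⁻¹) x,
    Measure.integral_comp_div (fun u : ℝ => (1 + u ^ 2)⁻¹) a, integral_univ_inv_one_add_sq,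
    smul_eq_mul, abs_of_pos ha]
  field_simp

lemma integral_poissonKernel_mul_mem_Icc {m : ℝ → ℝ} {c C : ℝ} (hm : Measurable m)
    (hlb : ∀ t, c ≤ m t) (hub : ∀ t, m t ≤ C) (x : ℝ) {a : ℝ} (ha : 0 < a) :
    ∫ t : ℝ, a / ((x - t) ^ 2 + a ^ 2) * m t ∈ Icc (π * c) (π * C) := by
  have hk : Integrable fun t : ℝ => a / ((x - t) ^ 2 + a ^ 2) := by
    simpa [div_eq_mul_inv] using (integrable_inv_sub_sq_add_sq x ha.ne').const_mul a
  have hkm : Integrable fun t : ℝ => a / ((x - t) ^ 2 + a ^ 2) * m t :=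
    hk.mul_bdd hm.aestronglyMeasurable (ae_of_all _ fun t => abs_le_max_abs_abs (hlb t) (hub t))
  have hk0 (t : ℝ) : 0 ≤ a / ((x - t) ^ 2 + a ^ 2) := by positivity
  constructor
  · calc π * c = ∫ t, a / ((x - t) ^ 2 + a ^ 2) * c := by
          rw [integral_mul_const, integral_poissonKernel x ha]
      _ ≤ _ := integral_mono (hk.mul_const c) hkm fun t =>
          mul_le_mul_of_nonneg_left (hlb t) (hk0 t)
  · calc _ ≤ ∫ t, a / ((x - t) ^ 2 + a ^ 2) * C := integral_mono hkm (hk.mul_const C) fun t =>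
          mul_le_mul_of_nonneg_left (hub t) (hk0 t)
      _ = π * C := by rw [integral_mul_const, integral_poissonKernel x ha]

lemma abs_integral_poissonKernel_mul {m : ℝ → ℝ} (hm0 : ∀ t, 0 ≤ m t) (x y : ℝ) :
    |∫ t : ℝ, y / ((x - t) ^ 2 + y ^ 2) * m t| =
      ∫ t : ℝ, |y| / ((x - t) ^ 2 + |y| ^ 2) * m t := by
  have hnonneg : 0 ≤ ∫ t : ℝ, |y| / ((x - t) ^ 2 + |y| ^ 2) * m t :=
    integral_nonneg fun t => mul_nonneg (by positivity) (hm0 t)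
  rcases abs_choice y with h | h <;> rw [h] at hnonneg ⊢
  · exact abs_of_nonneg hnonneg
  · simp only [neg_div, neg_sq, neg_mul, integral_neg] at hnonneg ⊢
    exact abs_of_nonpos (neg_nonneg.mp hnonneg)

@[fun_prop]
lemma measurable_chi : Measurable chi :=
  Measurable.ite measurableSet_Icc measurable_const measurable_const

lemma chi_eq_one_of_one_lt_abs {t : ℝ} (ht : 1 < |t|) : chi t = 1 :=
  if_neg fun h => (abs_le.mpr h).not_gt ht

lemma abs_chi_mul_div_le (a t : ℝ) : |chi t * a / t| ≤ |a| := by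
  by_cases ht : 1 < |t|
  · rw [chi_eq_one_of_one_lt_abs ht, one_mul, abs_div]
    exact div_le_self (abs_nonneg a) ht.le
  · rw [chi, if_pos (show t ∈ Icc (-1) 1 from abs_le.mp (not_lt.mp ht))]
    simp

lemma abs_log_norm_one_sub_add_re_le {w : ℂ} (hw : ‖w‖ ≤ 1 / 2) :
    |Real.log ‖1 - w‖ + w.re| ≤ ‖w‖ ^ 2 := by
  have h := Complex.norm_log_one_add_sub_self_le (z := -w) (by rw [norm_neg]; linarith)
  rw [norm_neg, ← sub_eq_add_neg, sub_neg_eq_add] at h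
  have hinv : (1 - ‖w‖)⁻¹ ≤ 2 := by
    rw [inv_le_comm₀ (by linarith) (by norm_num)]
    linarith
  calc |Real.log ‖1 - w‖ + w.re| = |(Complex.log (1 - w) + w).re| := by
        rw [Complex.add_re, Complex.log_re]
    _ ≤ ‖Complex.log (1 - w) + w‖ := Complex.abs_re_le_norm _
    _ ≤ ‖w‖ ^ 2 * (1 - ‖w‖)⁻¹ / 2 := h
    _ ≤ ‖w‖ ^ 2 * 2 / 2 := by gcongr
    _ = ‖w‖ ^ 2 := by ring

lemma abs_log_norm_one_sub_div_add_le (z : ℂ) {t : ℝ} (ht : 2 * ‖z‖ + 2 < |t|) :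
    |Real.log ‖1 - z / t‖ + chi t * z.re / t| ≤ 2 * ‖z‖ ^ 2 * (1 + t ^ 2)⁻¹ := by
  have ht1 : 1 < |t| := by linarith [norm_nonneg z]
  have hnorm : ‖z / t‖ = ‖z‖ / |t| := by rw [norm_div, Complex.norm_real, Real.norm_eq_abs]
  have hre : chi t * z.re / t = (z / t).re := by
    rw [chi_eq_one_of_one_lt_abs ht1, one_mul, Complex.div_ofReal_re]
  have hsmall : ‖z / t‖ ≤ 1 / 2 := by
    rw [hnorm, div_le_iff₀ (by linarith)]
    linarith [norm_nonneg z]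
  have ht2 : 1 ≤ t ^ 2 := by nlinarith [sq_abs t]
  calc _ ≤ ‖z / t‖ ^ 2 := by rw [hre]; exact abs_log_norm_one_sub_add_re_le hsmall
    _ = ‖z‖ ^ 2 / t ^ 2 := by rw [hnorm, div_pow, sq_abs]
    _ ≤ ‖z‖ ^ 2 / ((1 + t ^ 2) / 2) :=
        div_le_div_of_nonneg_left (sq_nonneg _) (by positivity) (by linarith)
    _ = 2 * ‖z‖ ^ 2 * (1 + t ^ 2)⁻¹ := by field_simp

lemma log_norm_one_sub_div {z : ℂ} {t : ℝ} (hz : (t : ℂ) ≠ z) (ht : t ≠ 0) :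
    Real.log ‖1 - z / t‖ = Real.log ‖(t : ℂ) - z‖ - Real.log t := by
  have htC : (t : ℂ) ≠ 0 := Complex.ofReal_ne_zero.mpr ht
  rw [← Real.log_abs t, ← Real.log_div (norm_ne_zero_iff.mpr (sub_ne_zero.mpr hz))
    (abs_ne_zero.mpr ht), ← Real.norm_eq_abs, ← Complex.norm_real, ← norm_div, sub_div, div_self htC]

lemma integrable_log_norm_one_sub_div_add {z : ℂ} (hz : z.im ≠ 0) :
    Integrable fun t : ℝ => Real.log ‖1 - z / t‖ + chi t * z.re / t := by
  have hne (t : ℝ) : (t : ℂ) ≠ z := fun h => hz (by rw [← h, Complex.ofReal_im])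
  have hmeas : AEStronglyMeasurable fun t : ℝ => Real.log ‖1 - z / t‖ + chi t * z.re / t := by
    exact (Measurable.add (by fun_prop) (by fun_prop)).aestronglyMeasurable
  set R := 2 * ‖z‖ + 2
  have hmid : IntegrableOn (fun t : ℝ => Real.log ‖1 - z / t‖ + chi t * z.re / t)
      (Icc (-R) R) := by
    have hlog : IntegrableOn (fun t : ℝ => Real.log ‖(t : ℂ) - z‖ - Real.log t) (Icc (-R) R) :=
      (Continuous.integrableOn_Icc ((by fun_prop : Continuous fun t : ℝ => ‖(t : ℂ) - z‖).log
        fun t => norm_ne_zero_iff.mpr (sub_ne_zero.mpr (hne t)))).sub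
        ((intervalIntegrable_iff_integrableOn_Icc_of_le (by linarith [norm_nonneg z])).mp
          intervalIntegral.intervalIntegrable_log')
    have hchi : IntegrableOn (fun t : ℝ => chi t * z.re / t) (Icc (-R) R) :=
      Measure.integrableOn_of_bounded (M := |z.re|) measure_Icc_lt_top.ne
        (by fun_prop : Measurable _).aestronglyMeasurable (ae_of_all _ fun t => abs_chi_mul_div_le z.re t)
    refine (hlog.add hchi).congr_fun_ae ?_
    filter_upwards [ae_restrict_of_ae (Measure.ae_ne volume 0)] with t ht
    simp only [Pi.add_apply, log_norm_one_sub_div (hne t) ht]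
  have htail : IntegrableOn (fun t : ℝ => Real.log ‖1 - z / t‖ + chi t * z.re / t)
      (Icc (-R) R)ᶜ := by
    refine (integrable_inv_one_add_sq.const_mul (2 * ‖z‖ ^ 2)).integrableOn.mono' hmeas.restrict
      ((ae_restrict_iff' measurableSet_Icc.compl).mpr (ae_of_all _ fun t ht => ?_))
    rw [mem_compl_iff, mem_Icc, ← abs_le, not_le] at ht
    exact abs_log_norm_one_sub_div_add_le z ht
  rw [← integrableOn_univ, ← union_compl_self (Icc (-R) R)]
  exact hmid.union htail

lemma hasDerivAt_log_norm_one_sub_div (x : ℝ) {t s : ℝ} (ht : t ≠ 0) (hs : s ≠ 0) :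
    HasDerivAt (fun u : ℝ => Real.log ‖1 - (x + u * Complex.I) / t‖)
      (s / ((x - t) ^ 2 + s ^ 2)) s := by
  have hformula (u : ℝ) (hu : u ≠ 0) :
      Real.log ‖1 - (x + u * Complex.I) / t‖ = Real.log ((x - t) ^ 2 + u ^ 2) / 2 - Real.log t := by
    have hne : (t : ℂ) ≠ x + u * Complex.I := fun h => hu (by simpa using (congrArg Complex.im h).symm)
    rw [log_norm_one_sub_div hne ht, ← Real.log_sqrt (by positivity), Complex.norm_def,
      Complex.normSq_apply]
    congr 3
    simp
    ring
  have hpos : 0 < (x - t) ^ 2 + s ^ 2 := by positivity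
  have hderiv := ((((hasDerivAt_pow 2 s).const_add ((x - t) ^ 2)).log hpos.ne').div_const 2).sub_const
    (Real.log t)
  refine (hderiv.congr_of_eventuallyEq ((eventually_ne_nhds hs).mono hformula)).congr_deriv ?_
  norm_num
  field_simp

lemma abs_div_sq_add_sq_le_of_mem_ball {y s : ℝ} (hs : s ∈ Metric.ball y (|y| / 2)) (a : ℝ) :
    |s / (a ^ 2 + s ^ 2)| ≤ 2 * |y| * (a ^ 2 + (y / 2) ^ 2)⁻¹ := by
  rw [Metric.mem_ball, Real.dist_eq] at hs
  have hy : 0 < |y| := by linarith [abs_nonneg (s - y)]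
  have hlow : |y / 2| ≤ |s| := by
    rw [abs_div, abs_two]
    linarith [abs_sub_abs_le_abs_sub y s, abs_sub_comm s y]
  have hup : |s| ≤ 2 * |y| := by linarith [abs_sub_abs_le_abs_sub s y]
  have hden : 0 < a ^ 2 + (y / 2) ^ 2 := by
    have := abs_pos.mp hy
    positivity
  have hden_le : a ^ 2 + (y / 2) ^ 2 ≤ a ^ 2 + s ^ 2 := by
    linarith [sq_le_sq.mpr hlow]
  rw [abs_div, abs_of_pos (hden.trans_le hden_le), ← div_eq_mul_inv]
  exact div_le_div₀ (by positivity) hup hden hden_le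

lemma hasDerivAt_omegaPot_ofReal_add_mul_I {m : ℝ → ℝ} {M : ℝ} (hm : Measurable m)
    (hmM : ∀ t, ‖m t‖ ≤ M) (x : ℝ) {y : ℝ} (hy : y ≠ 0) :
    HasDerivAt (fun s : ℝ => omegaPot m (x + s * Complex.I))
      (∫ t : ℝ, y / ((x - t) ^ 2 + y ^ 2) * m t) y := by
  set F : ℝ → ℝ → ℝ := fun s t =>
    (Real.log ‖1 - (x + s * Complex.I) / t‖ + chi t * x / t) * m t
  have hF : (fun s : ℝ => omegaPot m (x + s * Complex.I)) = fun s => ∫ t, F s t := by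
    funext s
    simp [omegaPot, F]
  have hF_meas (s : ℝ) : AEStronglyMeasurable (F s) :=
    (Measurable.mul (Measurable.add (by fun_prop) (by fun_prop)) hm).aestronglyMeasurable
  have hF_int : Integrable (F y) := by
    simpa using (integrable_log_norm_one_sub_div_add (z := x + y * Complex.I) (by simpa)).mul_bdd
      hm.aestronglyMeasurable (ae_of_all _ hmM)
  have hbound_int : Integrable fun t : ℝ => 2 * |y| * ((x - t) ^ 2 + (y / 2) ^ 2)⁻¹ * M :=
    ((integrable_inv_sub_sq_add_sq x (by simpa using hy)).const_mul (2 * |y|)).mul_const M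
  have h_bound : ∀ᵐ t : ℝ, ∀ s ∈ Metric.ball y (|y| / 2),
      ‖s / ((x - t) ^ 2 + s ^ 2) * m t‖ ≤ 2 * |y| * ((x - t) ^ 2 + (y / 2) ^ 2)⁻¹ * M :=
    ae_of_all _ fun t s hs => by
      rw [norm_mul, Real.norm_eq_abs]
      exact mul_le_mul (abs_div_sq_add_sq_le_of_mem_ball hs _) (hmM t) (norm_nonneg _)
        (by positivity)
  have h_diff : ∀ᵐ t : ℝ, ∀ s ∈ Metric.ball y (|y| / 2),
      HasDerivAt (F · t) (s / ((x - t) ^ 2 + s ^ 2) * m t) s := by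
    filter_upwards [Measure.ae_ne volume 0] with t ht s hs
    have hs0 : s ≠ 0 := by
      rintro rfl
      rw [Metric.mem_ball, dist_zero_left, Real.norm_eq_abs] at hs
      linarith [abs_nonneg y]
    exact ((hasDerivAt_log_norm_one_sub_div x ht hs0).add_const _).mul_const _
  rw [hF]
  exact (hasDerivAt_integral_of_dominated_loc_of_deriv_le
    (Metric.ball_mem_nhds y (by positivity)) (Eventually.of_forall hF_meas) hF_int
    (by fun_prop) h_bound hbound_int h_diff).2

theorem stmt3 (m : ℝ → ℝ) (c C : ℝ) (hc : 0 < c) (hm : Measurable m)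
    (hlb : ∀ t, c ≤ m t) (hub : ∀ t, m t ≤ C) (x y : ℝ) (hy : y ≠ 0) :
    HasDerivAt (fun s : ℝ => omegaPot m ((x : ℂ) + (s : ℂ) * Complex.I))
        (∫ t : ℝ, y / ((x - t) ^ 2 + y ^ 2) * m t) y ∧
      (∫ t : ℝ, y / ((x - t) ^ 2 + y ^ 2) * m t) = Real.pi * poissonT m x y ∧
      Real.pi * c ≤ |∫ t : ℝ, y / ((x - t) ^ 2 + y ^ 2) * m t| ∧
      |∫ t : ℝ, y / ((x - t) ^ 2 + y ^ 2) * m t| ≤ Real.pi * C := by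
  have hm0 (t : ℝ) : 0 ≤ m t := hc.le.trans (hlb t)
  have hmC (t : ℝ) : ‖m t‖ ≤ C := by rw [Real.norm_eq_abs, abs_of_nonneg (hm0 t)]; exact hub t
  have hbounds := integral_poissonKernel_mul_mem_Icc hm hlb hub x (abs_pos.mpr hy)
  rw [← abs_integral_poissonKernel_mul hm0] at hbounds
  refine ⟨hasDerivAt_omegaPot_ofReal_add_mul_I hm hmC x hy, ?_, hbounds⟩
  rw [poissonT]
  field_simp
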